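/- Let n ≥ 1, let 0 ≤ k ≤ n−1, and set l := max{k, n−k−1}. The i-lexical matchings M^i_{n,k} for i = 0, 1, …, l are pairwise disjoint and their union is the set of all edges of Q_n joining a vertex of level k to a vertex of level k+1. -/

import Mathlib

/-- The Hamming weight of a bitstring of length `n`, i.e., its number of 1-bits. -/
def wt {n : ℕ} (x : Fin n → Bool) : ℕ := (Finset.univ.filter fun i => x i = true).card

/-- The `n`-dimensional hypercube: vertices are bitstrings of length `n`, two of which are
adjacent iff they differ in exactly one position. -/
def cube (n : ℕ) : SimpleGraph (Fin n → Bool) where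
  Adj x y := hammingDist x y = 1
  symm := ⟨fun x y (h : hammingDist x y = 1) => by show hammingDist y x = 1; rwa [hammingDist_comm]⟩
  loopless := ⟨fun x (h : hammingDist x x = 1) => by simp [hammingDist_self] at h⟩
/-- The number of 1-bits among the first `j` bits of `x` (interpreting a bitstring as a
lattice path, this determines the height after `j` steps). -/
def onesUpTo {n : ℕ} (x : Fin n → Bool) (j : ℕ) : ℕ :=
  (Finset.univ.filter fun i : Fin n => i.val < j ∧ x i = true).card

/-- The height of the lattice path of `x` after `j` steps: number of 1s minus number of 0s
among the first `j` bits (appended steps beyond the length of `x` being down-steps). -/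
def hgt {n : ℕ} (x : Fin n → Bool) (j : ℕ) : ℤ := 2 * (onesUpTo x j : ℤ) - (j : ℤ)

/-- The length of the extended lattice path `x^↑`: if the final height `2·wt x − n` is `≥ −1`,
down-steps are appended until the path ends at height `−1` (total length `2·wt x + 1`);
otherwise nothing is appended. -/
def extLen {n : ℕ} (x : Fin n → Bool) : ℕ := max n (2 * wt x + 1)

/-- Position `j` (0-indexed) of the extended path `x^↑` is a down-step: either it is a 0-bit
of `x`, or one of the appended down-steps. -/
def isDownStep {n : ℕ} (x : Fin n → Bool) (j : ℕ) : Prop :=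
  j < extLen x ∧ ∀ h : j < n, x ⟨j, h⟩ = false

/-- The `i`-lexical matching `M^i_{n,k}` between levels `k` and `k+1` of the `n`-cube, as a
relation: `lexUp n k i x y` holds iff `x` lies in level `k` and `y = M^{i,↑}_{n,k}(x)`, i.e.,
`y` is obtained from `x` by flipping to 1 the 0-bit at the `i`-th down-step of `x^↑` in the
order of decreasing starting height, ties broken from right to left, counting from 0,
provided this down-step lies within `x`. -/
def lexUp (n k i : ℕ) (x y : Fin n → Bool) : Prop :=
  wt x = k ∧ ∃ d : ℕ, d < n ∧ isDownStep x d ∧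
    ({j : ℕ | isDownStep x j ∧ (hgt x d < hgt x j ∨ (hgt x j = hgt x d ∧ d < j))}).ncard = i ∧
    y = fun t : Fin n => if t.val = d then true else x t

/-! An edge from level `k` to level `k + 1` flips a single `0`-bit of its lower end `x`, that is, a
down-step `d` of `x^↑` lying within `x`; it lies in `M^i_{n,k}` exactly for `i` the rank of `d` in
the lexical order of the down-steps of `x^↑`. That rank is unique, and it is smaller than the
number of down-steps of `x^↑`, which is `max (k + 1) (n - k) = l + 1`. -/

open Finset Function

theorem hammingDist_eq_one_iff {ι : Type*} [Fintype ι] [DecidableEq ι] {β : ι → Type*}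
    [∀ i, DecidableEq (β i)] {x y : ∀ i, β i} :
    hammingDist x y = 1 ↔ ∃ a b, x a ≠ b ∧ y = update x a b := by
  rw [hammingDist, card_eq_one]
  constructor
  · rintro ⟨a, ha⟩
    have hdiff : ∀ i, x i ≠ y i ↔ i = a := fun i => by
      simpa using congrArg (i ∈ ·) ha
    refine ⟨a, y a, (hdiff a).2 rfl, funext fun i => ?_⟩
    rcases eq_or_ne i a with rfl | hi
    · simp
    · rw [update_of_ne hi]
      exact (not_not.1 (mt (hdiff i).1 hi)).symm
  · rintro ⟨a, b, hab, rfl⟩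
    refine ⟨a, ext fun i => ?_⟩
    rcases eq_or_ne i a with rfl | hi <;> simp [*]

variable {n : ℕ}

theorem wt_update_true {x : Fin n → Bool} {a : Fin n} (ha : x a = false) :
    wt (update x a true) = wt x + 1 := by
  rw [wt, wt, ← card_insert_of_notMem (by simp [ha] : a ∉ univ.filter fun i => x i = true)]
  congr 1
  ext i
  rcases eq_or_ne i a with rfl | hi <;> simp [*]

theorem eq_update_true_of_adj {x y : Fin n → Bool} (hxy : (cube n).Adj x y)
    (hw : wt y = wt x + 1) : ∃ a, x a = false ∧ y = update x a true := by
  obtain ⟨a, b, hab, rfl⟩ := hammingDist_eq_one_iff.1 hxy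
  cases hxa : x a
  · exact ⟨a, hxa, by cases b <;> simp_all⟩
  · -- flipping a `1` to `0` would lower the weight instead
    have hb : b = false := by cases b <;> simp_all
    subst hb
    have hx : update (update x a false) a true = x := by rw [update_idem, ← hxa, update_eq_self]
    have := wt_update_true (x := update x a false) (a := a) (by simp)
    rw [hx] at this
    omega

theorem wt_le (x : Fin n → Bool) : wt x ≤ n :=
  (card_filter_le _ _).trans_eq (card_fin n)

theorem card_filter_eq_false_eq_sub_wt (x : Fin n → Bool) : #{i | x i = false} = n - wt x := by
  have := card_filter_add_card_filter_not (s := univ) (fun i : Fin n => x i = true)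
  simp only [Bool.not_eq_true, card_univ, Fintype.card_fin] at this
  rw [wt]
  omega

def downSteps (x : Fin n → Bool) : Finset ℕ :=
  ({i | x i = false} : Finset (Fin n)).map Fin.valEmbedding ∪ Ico n (extLen x)

theorem mem_downSteps {x : Fin n → Bool} {j : ℕ} : j ∈ downSteps x ↔ isDownStep x j := by
  simp only [downSteps, isDownStep, extLen, mem_union, mem_map, mem_filter, mem_univ, true_and,
    mem_Ico, Fin.valEmbedding_apply]
  constructor
  · rintro (⟨i, hi, rfl⟩ | ⟨hnj, hj⟩)
    · exact ⟨i.isLt.trans_le (le_max_left _ _), fun _ => hi⟩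
    · exact ⟨hj, fun h => absurd h hnj.not_gt⟩
  · rintro ⟨hj, hx⟩
    rcases lt_or_ge j n with h | h
    · exact Or.inl ⟨⟨j, h⟩, hx h, rfl⟩
    · exact Or.inr ⟨h, hj⟩

theorem card_downSteps (x : Fin n → Bool) : #(downSteps x) = max (wt x) (n - wt x - 1) + 1 := by
  have hdisj : Disjoint (({i | x i = false} : Finset (Fin n)).map Fin.valEmbedding)
      (Ico n (extLen x)) :=
    disjoint_left.2 fun j hj hj' => by
      obtain ⟨i, -, rfl⟩ := mem_map.1 hj
      exact (mem_Ico.1 hj').1.not_gt i.isLt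
  rw [downSteps, card_union_of_disjoint hdisj, card_map, card_filter_eq_false_eq_sub_wt,
    Nat.card_Ico, extLen]
  have := wt_le x
  omega

theorem isDownStep_of_eq_false {x : Fin n → Bool} {a : Fin n} (ha : x a = false) :
    isDownStep x a :=
  ⟨a.isLt.trans_le (le_max_left _ _), fun _ => ha⟩

noncomputable def lexRank (x : Fin n → Bool) (d : ℕ) : ℕ :=
  {j : ℕ | isDownStep x j ∧ (hgt x d < hgt x j ∨ (hgt x j = hgt x d ∧ d < j))}.ncard

theorem lexRank_lt_card_downSteps {x : Fin n → Bool} {d : ℕ} (hd : isDownStep x d) :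
    lexRank x d < #(downSteps x) := by
  have hsub : {j : ℕ | isDownStep x j ∧ (hgt x d < hgt x j ∨ (hgt x j = hgt x d ∧ d < j))} ⊆
      ((downSteps x).erase d : Set ℕ) := by
    rintro j ⟨hj, hlt⟩
    refine mem_coe.2 (mem_erase.2 ⟨?_, mem_downSteps.2 hj⟩)
    rintro rfl
    omega
  calc lexRank x d ≤ #((downSteps x).erase d) :=
        (Set.ncard_le_ncard hsub (finite_toSet _)).trans_eq (Set.ncard_coe_finset _)
    _ < #(downSteps x) := card_erase_lt_of_mem (mem_downSteps.2 hd)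

theorem ite_val_eq_update (x : Fin n → Bool) {d : ℕ} (hd : d < n) :
    (fun t : Fin n => if t.val = d then true else x t) = update x ⟨d, hd⟩ true := by
  ext t
  simp [update_apply, Fin.ext_iff]

theorem lexUp_iff {k i : ℕ} {x y : Fin n → Bool} :
    lexUp n k i x y ↔
      wt x = k ∧ ∃ a : Fin n, x a = false ∧ lexRank x a = i ∧ y = update x a true := by
  refine and_congr_right fun _ => ⟨?_, ?_⟩
  · rintro ⟨d, hd, hds, rfl, rfl⟩
    exact ⟨⟨d, hd⟩, hds.2 hd, rfl, ite_val_eq_update x hd⟩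
  · rintro ⟨a, ha, rfl, rfl⟩
    exact ⟨a, a.isLt, isDownStep_of_eq_false ha, rfl, (ite_val_eq_update x a.isLt).symm⟩

namespace lexUp

variable {k i j : ℕ} {x y : Fin n → Bool}

theorem index_unique (h : lexUp n k i x y) (h' : lexUp n k j x y) : i = j := by
  obtain ⟨-, a, ha, rfl, rfl⟩ := lexUp_iff.1 h
  obtain ⟨-, b, -, rfl, hab⟩ := lexUp_iff.1 h'
  obtain rfl : a = b := by
    by_contra hne
    simpa [update_of_ne hne, ha] using congrFun hab a
  rfl

theorem wt_right (h : lexUp n k i x y) : wt y = k + 1 := by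
  obtain ⟨rfl, a, ha, -, rfl⟩ := lexUp_iff.1 h
  exact wt_update_true ha

theorem adj (h : lexUp n k i x y) : (cube n).Adj x y := by
  obtain ⟨-, a, ha, -, rfl⟩ := lexUp_iff.1 h
  exact hammingDist_eq_one_iff.2 ⟨a, true, by simp [ha], rfl⟩

end lexUp

theorem exists_lexUp_of_adj {k : ℕ} {x y : Fin n → Bool} (hx : wt x = k) (hy : wt y = k + 1)
    (hxy : (cube n).Adj x y) : ∃ i ≤ max k (n - k - 1), lexUp n k i x y := by
  obtain ⟨a, ha, rfl⟩ := eq_update_true_of_adj hxy (hx ▸ hy)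
  have hrank := lexRank_lt_card_downSteps (isDownStep_of_eq_false ha)
  rw [card_downSteps, hx] at hrank
  exact ⟨lexRank x a, Nat.lt_succ_iff.1 hrank, lexUp_iff.2 ⟨hx, a, ha, rfl, rfl⟩⟩

theorem lexical_matchings_partition_general (n k : ℕ) :
    (∀ i j, i ≤ max k (n - k - 1) → j ≤ max k (n - k - 1) → i ≠ j →
      ∀ x y : Fin n → Bool, lexUp n k i x y → ¬ lexUp n k j x y) ∧
    (∀ x y : Fin n → Bool,
      (wt x = k ∧ wt y = k + 1 ∧ (cube n).Adj x y) ↔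
        ∃ i ≤ max k (n - k - 1), lexUp n k i x y) :=
  ⟨fun _ _ _ _ hij _ _ h h' => hij (h.index_unique h'),
    fun _ _ => ⟨fun ⟨hx, hy, hxy⟩ => exists_lexUp_of_adj hx hy hxy,
      fun ⟨_, _, h⟩ => ⟨h.1, h.wt_right, h.adj⟩⟩⟩

/-- For `0 ≤ k ≤ n−1` and `l := max{k, n−k−1}`, the lexical matchings `M^i_{n,k}` for
`i = 0, 1, …, l` are pairwise disjoint, and their union is the set of all edges of the
`n`-cube joining a vertex of level `k` to a vertex of level `k+1`. -/
theorem lexical_matchings_partition (n k : ℕ) (hn : 1 ≤ n) (hk : k ≤ n - 1) :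
    (∀ i j, i ≤ max k (n - k - 1) → j ≤ max k (n - k - 1) → i ≠ j →
      ∀ x y : Fin n → Bool, lexUp n k i x y → ¬ lexUp n k j x y) ∧
    (∀ x y : Fin n → Bool,
      (wt x = k ∧ wt y = k + 1 ∧ (cube n).Adj x y) ↔
        ∃ i ≤ max k (n - k - 1), lexUp n k i x y) :=
  lexical_matchings_partition_general n k
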